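/- arXiv:math-ph/0610011 — 5 statements merged into one kernel-verified Lean document; each statement's English description precedes it below -/
import Mathlib

section
/- Let A be an associative algebra over a field K and N : A → A a Nijenhuis tensor. Then for all natural numbers k, r ≥ 0 and all A, B in A, the products ∘_{N^{k+r}} and ∘_{N^k} are N^r-related: N^r(A ∘_{N^{k+r}} B) = N^r(A) ∘_{N^k} N^r(B). -/
/-- The deformed product `A ∘_M B = M(A)·B + A·M(B) − M(A·B)`. -/
def circN {K A : Type*} [Field K] [NonUnitalRing A] [Module K A]
    [SMulCommClass K A A] [IsScalarTower K A A]
    (M : A →ₗ[K] A) (a b : A) : A :=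
  M a * b + a * M b - M (a * b)

/-- `M` is a Nijenhuis tensor if `M(A ∘_M B) = M(A)·M(B)` for all `A, B`. -/
def IsNijenhuis {K A : Type*} [Field K] [NonUnitalRing A] [Module K A]
    [SMulCommClass K A A] [IsScalarTower K A A]
    (M : A →ₗ[K] A) : Prop :=
  ∀ a b : A, M (circN M a b) = M a * M b

section Aux

variable {K A : Type*} [Field K] [NonUnitalRing A] [Module K A]
    [SMulCommClass K A A] [IsScalarTower K A A]

/-- Expanded form of the Nijenhuis condition. -/
lemma nij_expand (N : A →ₗ[K] A) (hN : IsNijenhuis N) (x y : A) :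
    N (N x * y) + N (x * N y) - N (N (x * y)) = N x * N y := by
  have := hN x y
  simpa [circN, map_add, map_sub] using this

lemma pow_comm_apply (N : A →ₗ[K] A) (m : ℕ) (x : A) :
    N ((N ^ m) x) = (N ^ m) (N x) := by
  rw [← Module.End.mul_apply, ← Module.End.mul_apply, ← pow_succ', ← pow_succ]

/-- The key step: `N(A ∘_{N^{m+1}} B) = N(A) ∘_{N^m} N(B)`. -/
lemma nij_step (N : A →ₗ[K] A) (hN : IsNijenhuis N) :
    ∀ (m : ℕ) (a b : A), N (circN (N ^ (m + 1)) a b) = circN (N ^ m) (N a) (N b) := by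
  intro m
  induction m with
  | zero =>
    intro a b
    simpa [circN, pow_one, pow_zero] using hN a b
  | succ m ih =>
    intro a b
    have e1 := nij_expand N hN ((N ^ m) (N a)) b
    have e2 := nij_expand N hN a ((N ^ m) (N b))
    have e3 := congrArg N (ih a b)
    simp only [circN, map_add, map_sub, pow_succ, Module.End.mul_apply,
      pow_comm_apply] at *
    linear_combination (norm := abel) e1 + e2 + e3

end Aux

/-- If `N` is a Nijenhuis tensor, then the products `∘_{N^{k+r}}` and `∘_{N^k}`
are `N^r`-related: `N^r(A ∘_{N^{k+r}} B) = N^r(A) ∘_{N^k} N^r(B)`. -/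
theorem powers_related_of_nijenhuis
    {K A : Type*} [Field K] [NonUnitalRing A] [Module K A]
    [SMulCommClass K A A] [IsScalarTower K A A] (N : A →ₗ[K] A)
    (hN : IsNijenhuis N) (k r : ℕ) :
    ∀ a b : A,
      (N ^ r) (circN (N ^ (k + r)) a b) = circN (N ^ k) ((N ^ r) a) ((N ^ r) b) := by
  induction r with
  | zero => intro a b; simp
  | succ r ih =>
    intro a b
    have h1 : (N ^ (r + 1)) (circN (N ^ (k + (r + 1))) a b)
        = (N ^ r) (N (circN (N ^ (k + r + 1)) a b)) := by
      rw [pow_succ, Module.End.mul_apply, ← Nat.add_assoc]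
    rw [h1, nij_step N hN (k + r) a b, ih (N a) (N b)]
    simp [pow_succ, Module.End.mul_apply]
end

section
/- Let A be an associative algebra over a field K and N : A → A a Nijenhuis tensor. Then for all natural numbers i, k ≥ 0, deforming the product ∘_{N^i} by the map N^k yields the product ∘_{N^{i+k}}: for all A, B in A, N^k(A) ∘_{N^i} B + A ∘_{N^i} N^k(B) − N^k(A ∘_{N^i} B) = A ∘_{N^{i+k}} B. Moreover N^r is a Nijenhuis tensor for the algebra (A, ∘_{N^i}), i.e. N^r( N^r(A) ∘_{N^i} B + A ∘_{N^i} N^r(B) − N^r(A ∘_{N^i} B) ) = N^r(A) ∘_{N^i} N^r(B) for all A, B and all r ≥ 0. -/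
/-- Key identity: for a Nijenhuis tensor `N`,
`N^m(a)·N^n(b) = N^n(N^m(a)·b) + N^m(a·N^n(b)) − N^{m+n}(a·b)`. -/
lemma keyG {K A : Type*} [Field K] [NonUnitalRing A] [Module K A]
    [SMulCommClass K A A] [IsScalarTower K A A] (N : A →ₗ[K] A)
    (hN : ∀ a b : A, N (N a * b + a * N b - N (a * b)) = N a * N b) :
    ∀ m n : ℕ, ∀ a b : A, (N ^ m) a * (N ^ n) b
      = (N ^ n) ((N ^ m) a * b) + (N ^ m) (a * (N ^ n) b) - (N ^ (m + n)) (a * b) := by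
  intro m
  induction m with
  | zero =>
    intro n a b
    simp only [pow_zero, Module.End.one_apply, Nat.zero_add]
    abel
  | succ m ihm =>
    intro n
    induction n with
    | zero =>
      intro a b
      simp only [pow_zero, Module.End.one_apply, Nat.add_zero]
      abel
    | succ n ihn =>
      intro a b
      have h1 := hN ((N ^ m) a) ((N ^ n) b)
      have e1 : ∀ x : A, N ((N ^ m) x) = (N ^ (m + 1)) x := by
        intro x; rw [pow_succ', Module.End.mul_apply]
      have e2 : ∀ x : A, N ((N ^ n) x) = (N ^ (n + 1)) x := by
        intro x; rw [pow_succ', Module.End.mul_apply]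
      rw [e1, e2, ihn, ihm (n + 1), ihm n] at h1
      rw [← h1]
      simp only [map_add, map_sub, Module.End.pow_apply, Function.iterate_add_apply,
        Function.iterate_succ_apply', Function.iterate_zero_apply]
      abel

/-- If `N` is a Nijenhuis tensor, then `(∘_{N^i})_{N^k} = ∘_{N^{i+k}}`, and `N^r`
is a Nijenhuis tensor for the algebra `(A, ∘_{N^i})`. -/
theorem deform_power_eq_and_power_nijenhuis
    {K A : Type*} [Field K] [NonUnitalRing A] [Module K A]
    [SMulCommClass K A A] [IsScalarTower K A A] (N : A →ₗ[K] A)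
    (hN : IsNijenhuis N) :
    (∀ i k : ℕ, ∀ a b : A,
      circN (N ^ i) ((N ^ k) a) b + circN (N ^ i) a ((N ^ k) b)
        - (N ^ k) (circN (N ^ i) a b) = circN (N ^ (i + k)) a b) ∧
    (∀ i r : ℕ, ∀ a b : A,
      (N ^ r) (circN (N ^ i) ((N ^ r) a) b + circN (N ^ i) a ((N ^ r) b)
        - (N ^ r) (circN (N ^ i) a b)) = circN (N ^ i) ((N ^ r) a) ((N ^ r) b)) := by
  have hN' : ∀ a b : A, N (N a * b + a * N b - N (a * b)) = N a * N b := by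
    intro a b
    simpa [circN] using hN a b
  have part1 : ∀ i k : ℕ, ∀ a b : A,
      circN (N ^ i) ((N ^ k) a) b + circN (N ^ i) a ((N ^ k) b)
        - (N ^ k) (circN (N ^ i) a b) = circN (N ^ (i + k)) a b := by
    intro i k a b
    have g1 := keyG N hN' k i a b
    have g2 := keyG N hN' i k a b
    rw [show k + i = i + k from Nat.add_comm k i] at g1
    simp only [circN, map_add, map_sub]
    rw [g1, g2]
    simp only [map_add, map_sub, ← Module.End.mul_apply, ← pow_add]
    simp only [Nat.add_comm, Nat.add_left_comm, Nat.add_assoc]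
    abel
  refine ⟨part1, ?_⟩
  intro i r a b
  rw [part1 i r a b]
  have e1 : (N ^ i) ((N ^ r) a) = (N ^ (i + r)) a := by
    rw [pow_add, Module.End.mul_apply]
  have e2 : (N ^ i) ((N ^ r) b) = (N ^ (i + r)) b := by
    rw [pow_add, Module.End.mul_apply]
  have g3 := keyG N hN' (i + r) r a b
  have g4 := keyG N hN' r (i + r) a b
  have g5 := keyG N hN' r r a b
  simp only [circN, map_add, map_sub, e1, e2]
  rw [g3, g4, g5]
  simp only [map_add, map_sub, ← Module.End.mul_apply, ← pow_add]
  simp only [Nat.add_comm, Nat.add_left_comm, Nat.add_assoc]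
  abel
end

section
/- Let A be an associative algebra over a field K and N : A → A a Nijenhuis tensor. Then for all natural numbers k, r ≥ 0, the products ∘_{N^k} and ∘_{N^r} are associative and compatible: for every λ ∈ K the product A ∗ B = (A ∘_{N^k} B) + λ (A ∘_{N^r} B) is associative. -/
section NijenhuisAux

variable {K A : Type*} [Field K] [NonUnitalRing A] [Module K A]
    [SMulCommClass K A A] [IsScalarTower K A A]

/-- Key identity: for a Nijenhuis tensor `N`,
`N^k a · N^r b = N^r (N^k a · b) + N^k (a · N^r b) - N^(k+r) (a·b)`. -/
theorem nijenhuis_pow_mul (N : A →ₗ[K] A) (hN : IsNijenhuis N) :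
    ∀ k r : ℕ, ∀ a b : A, (N^k) a * (N^r) b
      = (N^r) ((N^k) a * b) + (N^k) (a * (N^r) b) - (N^(k+r)) (a*b) := by
  have p : ∀ (m : ℕ) (x : A), (N^(m+1)) x = N ((N^m) x) := by
    intro m x; rw [pow_succ', Module.End.mul_apply]
  have E : ∀ x y : A, N x * N y = N (N x * y) + N (x * N y) - N (N (x*y)) := by
    intro x y
    have h := hN x y
    simp only [circN, map_add, map_sub] at h
    rw [← h]
  intro k
  induction k with
  | zero =>
    intro r a b
    simp only [pow_zero, Module.End.one_apply, zero_add]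
    abel
  | succ k ih =>
    intro r
    induction r with
    | zero =>
      intro a b
      simp only [pow_zero, Module.End.one_apply, add_zero]
      abel
    | succ r ihr =>
      intro a b
      have key : (N^(k+1)) a * (N^(r+1)) b
          = N ((N^(k+1)) a * (N^r) b) + N ((N^k) a * (N^(r+1)) b)
            - N (N ((N^k) a * (N^r) b)) := by
        have h := E ((N^k) a) ((N^r) b)
        simpa only [p] using h
      have e1 : k + 1 + (r+1) = (k + 1 + r) + 1 := by omega
      have e2 : k + (r+1) = (k + r) + 1 := by omega
      have e3 : k + 1 + r = (k + r) + 1 := by omega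
      rw [key, ihr a b, ih (r+1) a b, ih r a b, e1, e2, e3]
      simp only [map_add, map_sub, p]
      abel

/-- Any map whose Nijenhuis torsion vanishes has an associative deformed product. -/
theorem circN_assoc (M : A →ₗ[K] A) (h : ∀ x y : A, M (circN M x y) = M x * M y)
    (a b c : A) : circN M (circN M a b) c = circN M a (circN M b c) := by
  have h1 := h a b; have h2 := h b c; have h3 := h (a*b) c; have h4 := h a (b*c)
  simp only [circN, map_add, map_sub, add_mul, sub_mul, mul_add, mul_sub,
    mul_assoc] at h1 h2 h3 h4 ⊢
  have hc1 : M (M a * b) * c + M (a * M b) * c - M (M (a * b)) * c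
      = M a * (M b * c) := by
    have := congrArg (· * c) h1
    simpa only [add_mul, sub_mul, mul_assoc] using this
  have hc2 : a * M (M b * c) + a * M (b * M c) - a * M (M (b * c))
      = a * (M b * M c) := by
    have := congrArg (a * ·) h2
    simpa only [mul_add, mul_sub, mul_assoc] using this
  linear_combination (norm := abel) hc1 - hc2 + h3 - h4

/-- `circN` is linear in the deforming map. -/
theorem circN_sum (S R : A →ₗ[K] A) (l : K) (x y : A) :
    circN (S + l • R) x y = circN S x y + l • circN R x y := by
  simp only [circN, LinearMap.add_apply, LinearMap.smul_apply, map_add, map_smul,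
    add_mul, mul_add, smul_mul_assoc, mul_smul_comm, smul_add, smul_sub]
  abel

/-- The Nijenhuis torsion of `N^k + l • N^r` vanishes. -/
theorem torsion_pow_sum (N : A →ₗ[K] A) (hN : IsNijenhuis N) (k r : ℕ) (l : K) :
    ∀ x y : A, (N^k + l • N^r) (circN (N^k + l • N^r) x y)
      = (N^k + l • N^r) x * (N^k + l • N^r) y := by
  intro x y
  have c1 := nijenhuis_pow_mul N hN k k x y
  have c2 := nijenhuis_pow_mul N hN k r x y
  have c3 := nijenhuis_pow_mul N hN r k x y
  have c4 := nijenhuis_pow_mul N hN r r x y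
  simp only [pow_add, Module.End.mul_apply] at c1 c2 c3 c4
  simp only [circN_sum, circN, LinearMap.add_apply, LinearMap.smul_apply, map_add,
    map_sub, map_smul, smul_add, smul_sub, add_mul, mul_add, smul_mul_assoc,
    mul_smul_comm, smul_smul]
  linear_combination (norm := module) -c1 - l • c2 - l • c3 - (l*l) • c4

end NijenhuisAux

/-- If `N` is a Nijenhuis tensor, then all products `∘_{N^k}` are associative and
pairwise compatible: every `∘_{N^k} + λ ∘_{N^r}` is associative. -/
theorem power_products_assoc_and_compatible
    {K A : Type*} [Field K] [NonUnitalRing A] [Module K A]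
    [SMulCommClass K A A] [IsScalarTower K A A] (N : A →ₗ[K] A)
    (hN : IsNijenhuis N) (k r : ℕ) (l : K) :
    ∀ a b c : A,
      (circN (N ^ k) (circN (N ^ k) a b + l • circN (N ^ r) a b) c
        + l • circN (N ^ r) (circN (N ^ k) a b + l • circN (N ^ r) a b) c) =
      (circN (N ^ k) a (circN (N ^ k) b c + l • circN (N ^ r) b c)
        + l • circN (N ^ r) a (circN (N ^ k) b c + l • circN (N ^ r) b c)) := by
  intro a b c
  simp only [← circN_sum]
  exact circN_assoc _ (torsion_pow_sum N hN k r l) a b c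
end

section
/- Let A be an associative algebra over a field K and let N₁, …, N_k : A → A be pairwise compatible Nijenhuis tensors. Then any K-linear combination λ₁N₁ + ⋯ + λ_kN_k is a Nijenhuis tensor, and any two such linear combinations are compatible. -/
/-!
The Nijenhuis condition is quadratic in `M`: for `M + P` it splits into the conditions for `M`
and for `P` plus a mixed term that is linear in each of `M` and `P`. For Nijenhuis `M` and `P`,
compatibility is thus the vanishing of the mixed term, and the operators compatible with a given
one form a subspace. A sum of pairwise compatible Nijenhuis tensors is then Nijenhuis by induction
on the number of summands, and rescaling preserves both conditions.
-/

section Nijenhuis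

variable {K A : Type*} [Field K] [NonUnitalRing A] [Module K A]
  [SMulCommClass K A A] [IsScalarTower K A A]

lemma circN_add (M P : A →ₗ[K] A) (a b : A) :
    circN (M + P) a b = circN M a b + circN P a b := by
  simp only [circN, LinearMap.add_apply, add_mul, mul_add]
  abel

lemma circN_smul (c : K) (M : A →ₗ[K] A) (a b : A) :
    circN (c • M) a b = c • circN M a b := by
  simp only [circN, LinearMap.smul_apply, smul_mul_assoc, mul_smul_comm, smul_add, smul_sub]

/-- The `P` for which the mixed term of the Nijenhuis condition for `M + P` vanishes; for
Nijenhuis `M` and `P` this is compatibility (`isNijenhuis_add_iff`). -/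
def compatibleWith (M : A →ₗ[K] A) : Submodule K (A →ₗ[K] A) where
  carrier := {P | ∀ a b, M (circN P a b) + P (circN M a b) = M a * P b + P a * M b}
  zero_mem' a b := by simp [circN]
  add_mem' {P Q} hP hQ a b := by
    simp only [Set.mem_ofPred_eq, circN_add, map_add, LinearMap.add_apply, add_mul,
      mul_add] at hP hQ ⊢
    linear_combination (norm := abel) hP a b + hQ a b
  smul_mem' c P hP a b := by
    simp only [Set.mem_ofPred_eq, circN_smul, map_smul, LinearMap.smul_apply, smul_mul_assoc,
      mul_smul_comm] at hP ⊢
    rw [← smul_add, hP, smul_add]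

lemma mem_compatibleWith_comm {M P : A →ₗ[K] A} :
    P ∈ compatibleWith M ↔ M ∈ compatibleWith P :=
  forall₂_congr fun a b => by rw [add_comm (M _), add_comm (M a * _)]

lemma smul_mem_compatibleWith_smul {M P : A →ₗ[K] A} (h : P ∈ compatibleWith M) (c d : K) :
    c • P ∈ compatibleWith (d • M) :=
  Submodule.smul_mem _ c <| mem_compatibleWith_comm.1 <|
    Submodule.smul_mem _ d <| mem_compatibleWith_comm.1 h

lemma IsNijenhuis.smul {M : A →ₗ[K] A} (hM : IsNijenhuis M) (c : K) :
    IsNijenhuis (c • M) := fun a b => by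
  simp only [circN_smul, LinearMap.smul_apply, map_smul, hM a b, smul_mul_assoc, mul_smul_comm]

lemma isNijenhuis_add_iff {M P : A →ₗ[K] A} (hM : IsNijenhuis M) (hP : IsNijenhuis P) :
    IsNijenhuis (M + P) ↔ P ∈ compatibleWith M := by
  refine forall₂_congr fun a b => ?_
  simp only [circN_add, LinearMap.add_apply, map_add, add_mul, mul_add, hM a b, hP a b]
  constructor <;> intro h <;> linear_combination (norm := abel) h

lemma IsNijenhuis.sum {ι : Type*} {s : Finset ι} {N : ι → A →ₗ[K] A}
    (hN : ∀ i ∈ s, IsNijenhuis (N i))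
    (hcomp : (s : Set ι).Pairwise fun i j => N i ∈ compatibleWith (N j)) :
    IsNijenhuis (∑ i ∈ s, N i) := by
  classical
  induction s using Finset.induction_on with
  | empty => simp [IsNijenhuis, circN]
  | insert j s hj ih =>
    rw [Finset.coe_insert, Set.pairwise_insert] at hcomp
    rw [Finset.sum_insert hj, isNijenhuis_add_iff (hN j (Finset.mem_insert_self j s))
      (ih (fun i hi => hN i (Finset.mem_insert_of_mem hi)) hcomp.1)]
    exact Submodule.sum_mem _ fun i hi =>
      (hcomp.2 i hi (ne_of_mem_of_not_mem hi hj).symm).2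

end Nijenhuis

/-- If `N₁, …, N_k` are pairwise compatible Nijenhuis tensors, then every linear
combination of them is a Nijenhuis tensor, and any two linear combinations are
compatible (their sum is again a Nijenhuis tensor). -/
theorem linear_combinations_of_pairwise_compatible_nijenhuis
    {K A : Type*} [Field K] [NonUnitalRing A] [Module K A]
    [SMulCommClass K A A] [IsScalarTower K A A] {k : ℕ}
    (N : Fin k → (A →ₗ[K] A))
    (hN : ∀ i, IsNijenhuis (N i))
    (hcomp : ∀ i j, i ≠ j → IsNijenhuis (N i + N j)) :
    (∀ lam : Fin k → K, IsNijenhuis (∑ i, lam i • N i)) ∧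
    (∀ lam mu : Fin k → K,
      IsNijenhuis ((∑ i, lam i • N i) + ∑ i, mu i • N i)) := by
  have hcombination (lam : Fin k → K) : IsNijenhuis (∑ i, lam i • N i) :=
    IsNijenhuis.sum (fun i _ => (hN i).smul (lam i)) fun i _ j _ hij =>
      smul_mem_compatibleWith_smul ((isNijenhuis_add_iff (hN j) (hN i)).1 (hcomp j i hij.symm))
        (lam i) (lam j)
  refine ⟨hcombination, fun lam mu => ?_⟩
  simpa only [← Finset.sum_add_distrib, ← add_smul, Pi.add_apply] using hcombination (lam + mu)
end

section
/- Let A be an associative algebra over a field K which decomposes as a direct sum of K-subspaces A = A₁ ⊕ A₂, where A₁ is a subalgebra (closed under multiplication) but A₂ is merely a complementary subspace, and let P₁, P₂ be the corresponding projections. Then the product A ∘ B = P₁(A)·P₁(B) + P₂( P₁(A)·P₂(B) + P₂(A)·P₁(B) ) is associative. Moreover, when A₂ is itself a subalgebra, this product coincides with the deformed product ∘_{P₁}, i.e. A ∘_{P₁} B = P₁(A)·P₁(B) + P₂( P₁(A)·P₂(B) + P₂(A)·P₁(B) ) for all A, B in A. -/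
/-!
Write `P = P₁` and `Q = P₂ = 1 - P`. Because `A₁ · A₁ ⊆ A₁ = ker Q`, the `A₁`-part of
a factor is invisible to `Q` once the other factor lies in `A₁`: `Q (Q x · w) = Q (x · w)` and
`Q (w · Q x) = Q (w · x)` for `w ∈ A₁`. Hence both bracketings of `a ∘ b ∘ c` have
`A₁`-component `P a · P b · P c` and `A₂`-component
`Q (P a · P b · Q c + P a · Q b · P c + Q a · P b · P c)`. If `A₂` is closed too, then
`Q a · Q b ∈ ker P`, so `P (a b) = P a · P b + P (P a · Q b + Q a · P b)`, which is the
formula for `∘_P`.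
-/

section ContractedProduct

variable {R A : Type*} [Ring R] [NonUnitalRing A] [Module R A]

def contractedMul (P₁ P₂ : A →ₗ[R] A) (a b : A) : A :=
  P₁ a * P₁ b + P₂ (P₁ a * P₂ b + P₂ a * P₁ b)

namespace Submodule

variable {p q : Submodule R A} (h : IsCompl p q)

theorem projection_projection_mul_of_mem (hq : ∀ x y : A, x ∈ q → y ∈ q → x * y ∈ q)
    {w : A} (hw : w ∈ q) (x : A) :
    p.projection q h (p.projection q h x * w) = p.projection q h (x * w) := by
  have hx : x - p.projection q h x ∈ q := by
    rw [← projection_eq_self_sub_projection]; exact projection_apply_mem _ _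
  calc p.projection q h (p.projection q h x * w)
      = p.projection q h (p.projection q h x * w) +
          p.projection q h ((x - p.projection q h x) * w) := by
        rw [projection_apply_of_mem_right h (hq _ _ hx hw), add_zero]
    _ = p.projection q h (x * w) := by rw [← map_add, ← add_mul, add_sub_cancel]

theorem projection_mul_projection_of_mem (hq : ∀ x y : A, x ∈ q → y ∈ q → x * y ∈ q)
    {w : A} (hw : w ∈ q) (x : A) :
    p.projection q h (w * p.projection q h x) = p.projection q h (w * x) := by
  have hx : x - p.projection q h x ∈ q := by
    rw [← projection_eq_self_sub_projection]; exact projection_apply_mem _ _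
  calc p.projection q h (w * p.projection q h x)
      = p.projection q h (w * p.projection q h x) +
          p.projection q h (w * (x - p.projection q h x)) := by
        rw [projection_apply_of_mem_right h (hq _ _ hw hx), add_zero]
    _ = p.projection q h (w * x) := by rw [← map_add, ← mul_add, add_sub_cancel]

variable (hp : ∀ x y : A, x ∈ p → y ∈ p → x * y ∈ p)
include hp

theorem projection_contractedMul (a b : A) :
    p.projection q h (contractedMul (p.projection q h) (q.projection p h.symm) a b) =
      p.projection q h a * p.projection q h b := by
  rw [contractedMul, map_add, projection_apply_of_mem_left h (hp _ _ (by simp) (by simp)),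
    projection_apply_of_mem_right h (projection_apply_mem _ _), add_zero]

theorem projection_symm_contractedMul (a b : A) :
    q.projection p h.symm (contractedMul (p.projection q h) (q.projection p h.symm) a b) =
      q.projection p h.symm
        (p.projection q h a * q.projection p h.symm b +
          q.projection p h.symm a * p.projection q h b) := by
  rw [contractedMul, map_add,
    projection_apply_of_mem_right h.symm (hp _ _ (by simp) (by simp)),
    projection_apply_of_mem_left h.symm (projection_apply_mem _ _), zero_add]

theorem contractedMul_assoc (a b c : A) :
    contractedMul (p.projection q h) (q.projection p h.symm)
        (contractedMul (p.projection q h) (q.projection p h.symm) a b) c =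
      contractedMul (p.projection q h) (q.projection p h.symm) a
        (contractedMul (p.projection q h) (q.projection p h.symm) b c) := by
  set P := p.projection q h
  set Q := q.projection p h.symm
  have hP : ∀ x, P x ∈ p := projection_apply_mem h
  conv_lhs => rw [contractedMul, projection_contractedMul h hp, projection_symm_contractedMul h hp,
    map_add Q _ (Q _ * _), projection_projection_mul_of_mem h.symm hp (hP c)]
  conv_rhs => rw [contractedMul, projection_contractedMul h hp, projection_symm_contractedMul h hp,
    map_add Q (_ * Q _), projection_mul_projection_of_mem h.symm hp (hP a)]
  simp only [mul_add, add_mul, mul_assoc, map_add]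
  abel

end Submodule

end ContractedProduct

theorem circN_projection_eq_contractedMul {K A : Type*} [Field K] [NonUnitalRing A]
    [Module K A] [SMulCommClass K A A] [IsScalarTower K A A]
    {p q : Submodule K A} (h : IsCompl p q) (hp : ∀ x y : A, x ∈ p → y ∈ p → x * y ∈ p)
    (hq : ∀ x y : A, x ∈ q → y ∈ q → x * y ∈ q)
    (a b : A) :
    circN (p.projection q h) a b =
      contractedMul (p.projection q h) (q.projection p h.symm) a b := by
  set P := p.projection q h
  set Q := q.projection p h.symm
  have hPP : P (P a * P b) = P a * P b :=
    Submodule.projection_apply_of_mem_left h (hp _ _ (by simp [P]) (by simp [P]))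
  have hPQ : P (Q a * Q b) = 0 :=
    Submodule.projection_apply_of_mem_right h (hq _ _ (by simp [Q]) (by simp [Q]))
  calc circN P a b
      = P a * (P b + Q b) + (P a + Q a) * P b - P ((P a + Q a) * (P b + Q b)) := by
        simp only [circN, P, Q, Submodule.projection_add_projection_eq_self]
    _ = P a * P b + (P a * Q b + Q a * P b - P (P a * Q b + Q a * P b)) := by
        simp only [mul_add, add_mul, map_add, hPP, hPQ]
        abel
    _ = contractedMul P Q a b := by
        rw [contractedMul, ← Submodule.projection_eq_self_sub_projection]

/-- Let `A = A₁ ⊕ A₂` with `A₁` a subalgebra and `A₂` merely a complementary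
subspace, with projections `P₁, P₂`. Then
`A ∘ B = P₁(A)·P₁(B) + P₂(P₁(A)·P₂(B) + P₂(A)·P₁(B))` is associative; moreover,
if `A₂` is itself a subalgebra, this product coincides with `∘_{P₁}`. -/
theorem contracted_product_assoc_and_eq_circ_proj
    {K A : Type*} [Field K] [NonUnitalRing A] [Module K A]
    [SMulCommClass K A A] [IsScalarTower K A A]
    (A₁ A₂ : Submodule K A) (hc : IsCompl A₁ A₂)
    (h₁ : ∀ x y : A, x ∈ A₁ → y ∈ A₁ → x * y ∈ A₁)
    (P₁ P₂ : A →ₗ[K] A)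
    (hP₁ : P₁ = A₁.subtype ∘ₗ A₁.linearProjOfIsCompl A₂ hc)
    (hP₂ : P₂ = A₂.subtype ∘ₗ A₂.linearProjOfIsCompl A₁ hc.symm) :
    (∀ a b c : A,
      (P₁ (P₁ a * P₁ b + P₂ (P₁ a * P₂ b + P₂ a * P₁ b)) * P₁ c +
        P₂ (P₁ (P₁ a * P₁ b + P₂ (P₁ a * P₂ b + P₂ a * P₁ b)) * P₂ c +
            P₂ (P₁ a * P₁ b + P₂ (P₁ a * P₂ b + P₂ a * P₁ b)) * P₁ c)) =
      (P₁ a * P₁ (P₁ b * P₁ c + P₂ (P₁ b * P₂ c + P₂ b * P₁ c)) +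
        P₂ (P₁ a * P₂ (P₁ b * P₁ c + P₂ (P₁ b * P₂ c + P₂ b * P₁ c)) +
            P₂ a * P₁ (P₁ b * P₁ c + P₂ (P₁ b * P₂ c + P₂ b * P₁ c))))) ∧
    ((∀ x y : A, x ∈ A₂ → y ∈ A₂ → x * y ∈ A₂) →
      ∀ a b : A,
        circN P₁ a b = P₁ a * P₁ b + P₂ (P₁ a * P₂ b + P₂ a * P₁ b)) := by
  obtain rfl : P₁ = A₁.projection A₂ hc := hP₁
  obtain rfl : P₂ = A₂.projection A₁ hc.symm := hP₂
  exact ⟨Submodule.contractedMul_assoc hc h₁,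
    circN_projection_eq_contractedMul hc h₁⟩
end
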